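/- For n ≥ 2, the Cremmer–Gervais boundary element b := Σ_{i<j} Σ_{k=1}^{j-i} (e^{i+k}_i ⊗ e^{j-k+1}_j - e^{j-k+1}_j ⊗ e^{i+k}_i) ∈ End(ℂ^n)⊗End(ℂ^n) satisfies the associative classical Yang–Baxter equation b^{13} b^{12} - b^{12} b^{23} + b^{23} b^{13} = 0. -/

import Mathlib

open Matrix Kronecker BigOperators Finset

noncomputable section


/-- `r ⊗ 1` acting on the first two factors of ℂⁿ⊗ℂⁿ⊗ℂⁿ. -/
def op12 (n : ℕ) (r : Matrix (Fin n × Fin n) (Fin n × Fin n) ℂ) :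
    Matrix (Fin n × Fin n × Fin n) (Fin n × Fin n × Fin n) ℂ := fun p q =>
  r (p.1, p.2.1) (q.1, q.2.1) * (if p.2.2 = q.2.2 then 1 else 0)

/-- `1 ⊗ r` acting on the last two factors of ℂⁿ⊗ℂⁿ⊗ℂⁿ. -/
def op23 (n : ℕ) (r : Matrix (Fin n × Fin n) (Fin n × Fin n) ℂ) :
    Matrix (Fin n × Fin n × Fin n) (Fin n × Fin n × Fin n) ℂ := fun p q =>
  r p.2 q.2 * (if p.1 = q.1 then 1 else 0)

/-- `r` acting on the first and third factors of ℂⁿ⊗ℂⁿ⊗ℂⁿ. -/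
def op13 (n : ℕ) (r : Matrix (Fin n × Fin n) (Fin n × Fin n) ℂ) :
    Matrix (Fin n × Fin n × Fin n) (Fin n × Fin n × Fin n) ℂ := fun p q =>
  r (p.1, p.2.2) (q.1, q.2.2) * (if p.2.1 = q.2.1 then 1 else 0)

/-- The Cremmer–Gervais boundary r-matrix
`b = Σ_{i<j} Σ_{k=1}^{j-i} (e^{i+k}_i ⊗ e^{j-k+1}_j - e^{j-k+1}_j ⊗ e^{i+k}_i)`
as an operator on ℂⁿ⊗ℂⁿ.  Indices of `Fin n` are 0-based, so 1-based `e^{i+k}_i` becomes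
`stdBasisMatrix (i+k) i` with `0 ≤ i < j ≤ n-1`, `1 ≤ k ≤ j-i`. -/
def bCG (n : ℕ) : Matrix (Fin n × Fin n) (Fin n × Fin n) ℂ :=
  ∑ i : Fin n, ∑ j : Fin n, if h : i < j then
    ∑ k ∈ (Finset.Icc 1 (j.1 - i.1)).attach,
      (Matrix.single (⟨i.1 + k.1, by have := Finset.mem_Icc.mp k.2; omega⟩ : Fin n) i (1:ℂ) ⊗ₖ
        Matrix.single (⟨j.1 - k.1 + 1, by have := Finset.mem_Icc.mp k.2; omega⟩ : Fin n) j (1:ℂ)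
      - Matrix.single (⟨j.1 - k.1 + 1, by have := Finset.mem_Icc.mp k.2; omega⟩ : Fin n) j (1:ℂ) ⊗ₖ
        Matrix.single (⟨i.1 + k.1, by have := Finset.mem_Icc.mp k.2; omega⟩ : Fin n) i (1:ℂ))
  else 0

/-! The entry of `b` at `((a, b), (c, d))` vanishes unless `a + b = c + d + 1`, and then it is
`[a ≤ d] - [a ≤ c]`; in particular `a` lies between `c` and `d`. So in each of the three
products of the equation the contracted index is determined by the outer ones, and whenever the
term is nonzero it lies in range. What is left is an identity between step functions of six
integers, checked by cases. -/

def bCGHalf (n : ℕ) : Matrix (Fin n × Fin n) (Fin n × Fin n) ℂ :=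
  ∑ i : Fin n, ∑ j : Fin n, if h : i < j then
    ∑ k ∈ (Finset.Icc 1 (j.1 - i.1)).attach,
      Matrix.single (⟨i.1 + k.1, by have := Finset.mem_Icc.mp k.2; omega⟩ : Fin n) i (1:ℂ) ⊗ₖ
        Matrix.single (⟨j.1 - k.1 + 1, by have := Finset.mem_Icc.mp k.2; omega⟩ : Fin n) j (1:ℂ)
  else 0

def bCGHalfEntry (a b c d : ℤ) : ℤ := if a + b = c + d + 1 ∧ c < a ∧ a ≤ d then 1 else 0

def bCGEntry (a b c d : ℤ) : ℤ := bCGHalfEntry a b c d - bCGHalfEntry b a d c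

theorem bCG_eq (n : ℕ) : bCG n = bCGHalf n - (bCGHalf n).submatrix Prod.swap Prod.swap := by
  ext ⟨a, b⟩ ⟨c, d⟩
  simp only [bCG, bCGHalf, Matrix.sum_apply, Matrix.sub_apply, Matrix.submatrix_apply,
    apply_dite (fun M : Matrix (Fin n × Fin n) (Fin n × Fin n) ℂ => M (a, b) (c, d)),
    apply_dite (fun M : Matrix (Fin n × Fin n) (Fin n × Fin n) ℂ => M (b, a) (d, c)),
    Matrix.zero_apply, Matrix.kroneckerMap_apply, Prod.swap, mul_comm, ← Finset.sum_sub_distrib]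
  refine Finset.sum_congr rfl fun i _ => Finset.sum_congr rfl fun j _ => ?_
  split_ifs <;> simp

theorem sum_Icc_boole_add_eq_and_sub_add_eq {R : Type*} [AddCommMonoidWithOne R] (a b c d : ℕ) :
    ∑ k ∈ Icc 1 (d - c), (if c + k = a ∧ d - k + 1 = b then (1 : R) else 0) =
      if a + b = c + d + 1 ∧ c < a ∧ a ≤ d then 1 else 0 := by
  split_ifs with h
  · rw [Finset.sum_eq_single_of_mem (a - c) (by simp; omega) fun k _ hk => if_neg (by omega),
      if_pos (by omega)]
  · exact Finset.sum_eq_zero fun k hk => if_neg (by simp at hk; omega)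

theorem bCGHalf_apply {n : ℕ} (a b c d : Fin n) :
    bCGHalf n (a, b) (c, d) = bCGHalfEntry a b c d := by
  simp only [bCGHalf, Matrix.sum_apply, Matrix.zero_apply, Matrix.kroneckerMap_apply,
    apply_dite (fun M : Matrix (Fin n × Fin n) (Fin n × Fin n) ℂ => M (a, b) (c, d))]
  rw [Fintype.sum_eq_single c, Fintype.sum_eq_single d]
  · split_ifs with hcd
    · simp only [Matrix.single_apply, Fin.ext_iff, and_true, ite_mul, one_mul, zero_mul,
        ← ite_and]
      rw [Finset.sum_attach (Icc 1 (d.1 - c.1))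
          (fun k => if c.1 + k = a ∧ d.1 - k + 1 = b then (1 : ℂ) else 0),
        sum_Icc_boole_add_eq_and_sub_add_eq, bCGHalfEntry]
      split_ifs <;> first | omega | simp
    · rw [bCGHalfEntry, if_neg (by omega), Int.cast_zero]
  · intro j hj
    simp [Matrix.single_apply, hj]
  · intro i hi
    simp [Matrix.single_apply, hi]

theorem bCG_apply {n : ℕ} (a b c d : Fin n) : bCG n (a, b) (c, d) = bCGEntry a b c d := by
  rw [bCG_eq, Matrix.sub_apply, Matrix.submatrix_apply, Prod.swap, Prod.swap, bCGHalf_apply,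
    bCGHalf_apply, bCGEntry, Int.cast_sub]

theorem bCGEntry_of_eq {a b c d : ℤ} (h : a + b = c + d + 1) :
    bCGEntry a b c d = (if a ≤ d then 1 else 0) - (if a ≤ c then 1 else 0) := by
  unfold bCGEntry bCGHalfEntry
  split_ifs <;> omega

theorem bCGEntry_of_ne {a b c d : ℤ} (h : a + b ≠ c + d + 1) : bCGEntry a b c d = 0 := by
  unfold bCGEntry bCGHalfEntry
  split_ifs <;> omega

theorem bCGEntry_ne_zero {a b c d : ℤ} (h : bCGEntry a b c d ≠ 0) :
    a + b = c + d + 1 ∧ (c < a ∧ a ≤ d ∨ d < a ∧ a ≤ c) := by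
  unfold bCGEntry bCGHalfEntry at h
  split_ifs at h <;> omega

/-- The contracted index of each product has been solved for from the outer indices. -/
theorem bCGEntry_acyb (a b c x y z : ℤ) :
    bCGEntry a c (a + c - z - 1) z * bCGEntry (a + c - z - 1) b x y
      - bCGEntry a b x (a + b - x - 1) * bCGEntry (a + b - x - 1) c y z
      + bCGEntry b c y (b + c - y - 1) * bCGEntry a (b + c - y - 1) x z = 0 := by
  by_cases hs : a + b + c = x + y + z + 2
  · rw [bCGEntry_of_eq (by omega), bCGEntry_of_eq (by omega), bCGEntry_of_eq (by omega),
      bCGEntry_of_eq (by omega), bCGEntry_of_eq (by omega), bCGEntry_of_eq (by omega)]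
    split_ifs <;> omega
  · rw [bCGEntry_of_ne (a := a + c - z - 1) (b := b) (c := x) (d := y) (by omega),
      bCGEntry_of_ne (a := a + b - x - 1) (b := c) (c := y) (d := z) (by omega),
      bCGEntry_of_ne (a := a) (b := b + c - y - 1) (c := x) (d := z) (by omega)]
    ring

section

variable {n : ℕ} (r s : Matrix (Fin n × Fin n) (Fin n × Fin n) ℂ) (a b c x y z : Fin n)

theorem op13_mul_op12_apply :
    (op13 n r * op12 n s) (a, b, c) (x, y, z) = ∑ m, r (a, c) (m, z) * s (m, b) (x, y) := by
  simp [Matrix.mul_apply, op13, op12, Fintype.sum_prod_type]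

theorem op12_mul_op23_apply :
    (op12 n r * op23 n s) (a, b, c) (x, y, z) = ∑ m, r (a, b) (x, m) * s (m, c) (y, z) := by
  simp [Matrix.mul_apply, op12, op23, Fintype.sum_prod_type]

theorem op23_mul_op13_apply :
    (op23 n r * op13 n s) (a, b, c) (x, y, z) = ∑ m, r (b, c) (y, m) * s (a, m) (x, z) := by
  simp [Matrix.mul_apply, op23, op13, Fintype.sum_prod_type]

end

theorem Fin.sum_intCast_eq_of_support {M : Type*} [AddCommMonoid M] {n : ℕ} (g : ℤ → M)
    (m₀ : ℤ) (hg : ∀ m, g m ≠ 0 → m = m₀ ∧ 0 ≤ m ∧ m < n) : ∑ m : Fin n, g m = g m₀ := by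
  by_cases h : 0 ≤ m₀ ∧ m₀ < n
  · rw [Fintype.sum_eq_single ⟨m₀.toNat, by omega⟩ fun m hm => ?_]
    · simp [Int.toNat_of_nonneg h.1]
    · by_contra hne
      exact hm (Fin.ext (by have := (hg _ hne).1; simp; omega))
  · rw [Finset.sum_eq_zero fun m _ => ?_]
    · by_contra hne
      exact h (hg _ (Ne.symm hne)).2
    · by_contra hne
      have := hg _ hne
      omega

theorem bCG_acYB_general (n : ℕ) :
    op13 n (bCG n) * op12 n (bCG n) - op12 n (bCG n) * op23 n (bCG n)
      + op23 n (bCG n) * op13 n (bCG n) = 0 := by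
  ext ⟨a, b, c⟩ ⟨x, y, z⟩
  have support {p q r s : ℤ} (h : ((bCGEntry p q r s : ℤ) : ℂ) ≠ 0) :
      p + q = r + s + 1 ∧ (r < p ∧ p ≤ s ∨ s < p ∧ p ≤ r) :=
    bCGEntry_ne_zero (Int.cast_ne_zero.mp h)
  rw [Matrix.add_apply, Matrix.sub_apply, op13_mul_op12_apply, op12_mul_op23_apply,
    op23_mul_op13_apply, Matrix.zero_apply]
  simp only [bCG_apply]
  rw [Fin.sum_intCast_eq_of_support (fun m => (bCGEntry a c m z : ℂ) * bCGEntry m b x y)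
      (a + c - z - 1),
    Fin.sum_intCast_eq_of_support (fun m => (bCGEntry a b x m : ℂ) * bCGEntry m c y z)
      (a + b - x - 1),
    Fin.sum_intCast_eq_of_support (fun m => (bCGEntry b c y m : ℂ) * bCGEntry a m x z)
      (b + c - y - 1)]
  · exact_mod_cast bCGEntry_acyb a b c x y z
  all_goals
    intro m hm
    obtain ⟨h₁, h₂⟩ := mul_ne_zero_iff.mp hm
    have := support h₁
    have := support h₂
    omega

/-- The boundary element `b` satisfies the associative classical Yang–Baxter equation
`b¹³ b¹² - b¹² b²³ + b²³ b¹³ = 0`. -/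
theorem bCG_acYB (n : ℕ) (hn : 2 ≤ n) :
    op13 n (bCG n) * op12 n (bCG n) - op12 n (bCG n) * op23 n (bCG n)
      + op23 n (bCG n) * op13 n (bCG n) = 0 :=
  bCG_acYB_general n
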